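/- The log-sum-exp function lse(x) = log(Σ_{i∈[n]} exp(x_i)) is 2-quasi-self-concordant in the ℓ∞ norm: for all x, u, h ∈ ℝ^n, |∇³lse(x)[u,u,h]| ≤ 2 ‖h‖∞ · uᵀ∇²lse(x)u. -/

import Mathlib

/-! Write `E_y[v] = ∑ i, softmax y i * v i` for the mean under the softmax weights of `y`.
The gradient of `lse` at `y` is `E_y`, and differentiating the quotient
`E_y[v] = (∑ i, exp (y i) * v i) / ∑ i, exp (y i)` gives `D E_y[v] w = Cov_y(v, w)`.
Hence the second and third derivatives of `lse` are the central moments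
`E[(v - v̄)(w - w̄)]` and `E[(v - v̄)(w - w̄)(z - z̄)]`. For `v = w = u` the weight
`(u - ū)²` is nonnegative, and `|h i - h̄| ≤ 2 ‖h‖∞` because `h̄` is an average of the
`h i`. -/

section IteratedFDeriv

variable {𝕜 E F : Type*} [NontriviallyNormedField 𝕜]
  [NormedAddCommGroup E] [NormedSpace 𝕜 E] [NormedAddCommGroup F] [NormedSpace 𝕜 F]
  {f : E → F} {x : E}

theorem iteratedFDeriv_succ_apply_cons {n : ℕ}
    (hf : DifferentiableAt 𝕜 (iteratedFDeriv 𝕜 n f) x) (v : E) (m : Fin n → E) :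
    iteratedFDeriv 𝕜 (n + 1) f x (Fin.cons v m) =
      fderiv 𝕜 (fun y ↦ iteratedFDeriv 𝕜 n f y m) x v := by
  rw [iteratedFDeriv_succ_apply_left, fderiv_continuousMultilinear_apply_const_apply hf]
  simp

theorem iteratedFDeriv_two_apply_eq_fderiv_fderiv (hf : ContDiff 𝕜 2 f) (v w : E) :
    iteratedFDeriv 𝕜 2 f x ![v, w] = fderiv 𝕜 (fun y ↦ fderiv 𝕜 f y w) x v := by
  rw [Matrix.vecCons, iteratedFDeriv_succ_apply_cons
    (hf.differentiable_iteratedFDeriv (by norm_num) x)]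
  simp [iteratedFDeriv_one_apply]

theorem iteratedFDeriv_three_apply_eq_fderiv_fderiv_fderiv (hf : ContDiff 𝕜 3 f) (v w z : E) :
    iteratedFDeriv 𝕜 3 f x ![v, w, z] =
      fderiv 𝕜 (fun y ↦ fderiv 𝕜 (fun y' ↦ fderiv 𝕜 f y' z) y w) x v := by
  rw [Matrix.vecCons, iteratedFDeriv_succ_apply_cons
    (hf.differentiable_iteratedFDeriv (by norm_num) x)]
  congr 2 with y
  exact iteratedFDeriv_two_apply_eq_fderiv_fderiv (hf.of_le (by norm_num)) w z

end IteratedFDeriv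

open Real Finset

section Softmax

variable {ι : Type*} [Fintype ι]

noncomputable def softmax (y : ι → ℝ) (i : ι) : ℝ := exp (y i) / ∑ j, exp (y j)

noncomputable def softmaxMean (y v : ι → ℝ) : ℝ := ∑ i, softmax y i * v i

noncomputable def softmaxCov (y a b : ι → ℝ) : ℝ :=
  softmaxMean y (a * b) - softmaxMean y a * softmaxMean y b

theorem softmax_nonneg (y : ι → ℝ) (i : ι) : 0 ≤ softmax y i := by
  unfold softmax; positivity

theorem sum_exp_pos [Nonempty ι] (y : ι → ℝ) : 0 < ∑ i, exp (y i) :=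
  Finset.sum_pos (fun i _ ↦ exp_pos (y i)) univ_nonempty

theorem sum_softmax [Nonempty ι] (y : ι → ℝ) : ∑ i, softmax y i = 1 := by
  simp only [softmax, ← Finset.sum_div]
  exact div_self (sum_exp_pos y).ne'

theorem softmaxMean_eq_div (y v : ι → ℝ) :
    softmaxMean y v = (∑ i, exp (y i) * v i) / ∑ i, exp (y i) := by
  simp only [softmaxMean, softmax, Finset.sum_div, div_mul_eq_mul_div]

theorem abs_softmaxMean_le [Nonempty ι] (y : ι → ℝ) {v : ι → ℝ} {M : ℝ}
    (hv : ∀ i, |v i| ≤ M) : |softmaxMean y v| ≤ M := by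
  calc |softmaxMean y v| ≤ ∑ i, |softmax y i * v i| := abs_sum_le_sum_abs _ _
    _ ≤ ∑ i, softmax y i * M := by
        gcongr with i
        rw [abs_mul, abs_of_nonneg (softmax_nonneg y i)]
        exact mul_le_mul_of_nonneg_left (hv i) (softmax_nonneg y i)
    _ = M := by rw [← Finset.sum_mul, sum_softmax, one_mul]

theorem hasFDerivAt_sum_exp_mul (v y : ι → ℝ) :
    HasFDerivAt (fun z : ι → ℝ ↦ ∑ i, exp (z i) * v i)
      (∑ i, (exp (y i) * v i) •
        ContinuousLinearMap.proj (R := ℝ) (φ := fun _ : ι ↦ ℝ) i) y :=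
  HasFDerivAt.fun_sum fun i _ ↦
    ((hasFDerivAt_apply i y).exp.mul_const (v i)).congr_fderiv (by rw [smul_smul, mul_comm])

theorem hasFDerivAt_sum_exp (y : ι → ℝ) :
    HasFDerivAt (fun z : ι → ℝ ↦ ∑ i, exp (z i))
      (∑ i, exp (y i) • ContinuousLinearMap.proj (R := ℝ) (φ := fun _ : ι ↦ ℝ) i)
      y := by
  simpa using hasFDerivAt_sum_exp_mul 1 y

theorem fderiv_log_sum_exp_apply [Nonempty ι] (y w : ι → ℝ) :
    fderiv ℝ (fun z : ι → ℝ ↦ log (∑ i, exp (z i))) y w = softmaxMean y w := by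
  rw [((hasFDerivAt_sum_exp y).log (sum_exp_pos y).ne').fderiv, softmaxMean_eq_div]
  simp [div_eq_inv_mul]

theorem differentiable_softmaxMean [Nonempty ι] (v : ι → ℝ) :
    Differentiable ℝ (fun z ↦ softmaxMean z v) := by
  simp_rw [softmaxMean_eq_div, div_eq_mul_inv]
  fun_prop (disch := exact fun z ↦ (sum_exp_pos z).ne')

theorem fderiv_softmaxMean_apply [Nonempty ι] (v y w : ι → ℝ) :
    fderiv ℝ (fun z ↦ softmaxMean z v) y w = softmaxCov y v w := by
  have h :
      HasFDerivAt (fun z : ι → ℝ ↦ (∑ i, exp (z i) * v i) * (∑ i, exp (z i))⁻¹) _ y :=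
    (hasFDerivAt_sum_exp_mul v y).fun_mul
      ((hasDerivAt_inv (sum_exp_pos y).ne').comp_hasFDerivAt y (hasFDerivAt_sum_exp y))
  simp_rw [softmaxMean_eq_div, div_eq_mul_inv]
  rw [h.fderiv]
  have hS := (sum_exp_pos y).ne'
  simp only [neg_smul, smul_neg, add_apply, neg_apply, smul_apply,
    _root_.sum_apply, ContinuousLinearMap.proj_apply, smul_eq_mul,
    mul_assoc, softmaxCov, softmaxMean_eq_div, Pi.mul_apply]
  field_simp
  ring

theorem fderiv_softmaxCov_apply [Nonempty ι] (a b y w : ι → ℝ) :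
    fderiv ℝ (fun z ↦ softmaxCov z a b) y w =
      softmaxCov y (a * b) w -
        (softmaxMean y a * softmaxCov y b w + softmaxMean y b * softmaxCov y a w) := by
  have hd := differentiable_softmaxMean (ι := ι)
  simp only [softmaxCov]
  rw [fderiv_fun_sub (hd _ y) ((hd a y).fun_mul (hd b y)), fderiv_fun_mul (hd a y) (hd b y)]
  simp [fderiv_softmaxMean_apply, softmaxCov]

theorem softmaxCov_eq_softmaxMean_centered [Nonempty ι] (y a b : ι → ℝ) :
    softmaxCov y a b =
      softmaxMean y (fun i ↦ (a i - softmaxMean y a) * (b i - softmaxMean y b)) := by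
  have h (A B : ℝ) (i : ι) : softmax y i * ((a i - A) * (b i - B)) =
      softmax y i * (a i * b i) - A * (softmax y i * b i) - B * (softmax y i * a i) +
        A * B * softmax y i := by ring
  simp only [softmaxCov, softmaxMean, Pi.mul_apply, h, sum_add_distrib, sum_sub_distrib,
    ← mul_sum, sum_softmax]
  ring

theorem softmaxCov_mul_sub_eq_softmaxMean_centered [Nonempty ι] (y a b c : ι → ℝ) :
    softmaxCov y (a * b) c -
        (softmaxMean y a * softmaxCov y b c + softmaxMean y b * softmaxCov y a c) =
      softmaxMean y (fun i ↦
        (a i - softmaxMean y a) * (b i - softmaxMean y b) * (c i - softmaxMean y c)) := by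
  have h (A B C : ℝ) (i : ι) : softmax y i * ((a i - A) * (b i - B) * (c i - C)) =
      softmax y i * (a i * b i * c i) - A * (softmax y i * (b i * c i))
        - B * (softmax y i * (a i * c i)) - C * (softmax y i * (a i * b i))
        + A * B * (softmax y i * c i) + A * C * (softmax y i * b i) + B * C * (softmax y i * a i)
        - A * B * C * softmax y i := by ring
  simp only [softmaxCov, softmaxMean, Pi.mul_apply, h, sum_add_distrib, sum_sub_distrib,
    ← mul_sum, sum_softmax]
  ring

theorem abs_softmaxMean_mul_le (y : ι → ℝ) {f g : ι → ℝ} {M : ℝ} (hf : ∀ i, 0 ≤ f i)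
    (hg : ∀ i, |g i| ≤ M) : |softmaxMean y (f * g)| ≤ M * softmaxMean y f := by
  calc |softmaxMean y (f * g)| ≤ ∑ i, |softmax y i * (f i * g i)| := abs_sum_le_sum_abs _ _
    _ ≤ ∑ i, M * (softmax y i * f i) := by
        gcongr with i
        rw [abs_mul, abs_mul, abs_of_nonneg (softmax_nonneg y i), abs_of_nonneg (hf i),
          ← mul_assoc, mul_comm M]
        exact mul_le_mul_of_nonneg_left (hg i) (mul_nonneg (softmax_nonneg y i) (hf i))
    _ = M * softmaxMean y f := by rw [softmaxMean, mul_sum]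

theorem contDiff_log_sum_exp [Nonempty ι] {n : WithTop ℕ∞} :
    ContDiff ℝ n (fun y : ι → ℝ ↦ log (∑ i, exp (y i))) :=
  (ContDiff.sum fun i _ ↦ by fun_prop).log fun y ↦ (sum_exp_pos y).ne'

theorem iteratedFDeriv_two_log_sum_exp [Nonempty ι] (x v w : ι → ℝ) :
    iteratedFDeriv ℝ 2 (fun y : ι → ℝ ↦ log (∑ i, exp (y i))) x ![v, w] =
      softmaxMean x (fun i ↦ (v i - softmaxMean x v) * (w i - softmaxMean x w)) := by
  rw [iteratedFDeriv_two_apply_eq_fderiv_fderiv contDiff_log_sum_exp]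
  simp only [fderiv_log_sum_exp_apply, fderiv_softmaxMean_apply,
    softmaxCov_eq_softmaxMean_centered]
  congr 1 with i
  ring

theorem iteratedFDeriv_three_log_sum_exp [Nonempty ι] (x v w z : ι → ℝ) :
    iteratedFDeriv ℝ 3 (fun y : ι → ℝ ↦ log (∑ i, exp (y i))) x ![v, w, z] =
      softmaxMean x (fun i ↦
        (v i - softmaxMean x v) * (w i - softmaxMean x w) * (z i - softmaxMean x z)) := by
  rw [iteratedFDeriv_three_apply_eq_fderiv_fderiv_fderiv contDiff_log_sum_exp]
  simp only [fderiv_log_sum_exp_apply, fderiv_softmaxMean_apply, fderiv_softmaxCov_apply,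
    softmaxCov_mul_sub_eq_softmaxMean_centered]
  congr 1 with i
  ring

end Softmax

/-- `lse` is 2-quasi-self-concordant in the `ℓ∞` norm:
`|∇³lse(x)[u,u,h]| ≤ 2 ‖h‖∞ uᵀ∇²lse(x)u`. -/
theorem stmt7 {n : ℕ} (x u h : Fin n → ℝ) :
    |iteratedFDeriv ℝ 3 (fun y : Fin n → ℝ => Real.log (∑ i, Real.exp (y i))) x ![u, u, h]|
      ≤ 2 * ‖h‖ *
          iteratedFDeriv ℝ 2 (fun y : Fin n → ℝ => Real.log (∑ i, Real.exp (y i))) x ![u, u] := by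
  rcases isEmpty_or_nonempty (Fin n) with hn | hn
  · obtain rfl : u = 0 := Subsingleton.elim _ _
    simp
  rw [iteratedFDeriv_three_log_sum_exp, iteratedFDeriv_two_log_sum_exp]
  refine abs_softmaxMean_mul_le x (fun i ↦ mul_self_nonneg _) fun i ↦ ?_
  calc |h i - softmaxMean x h| ≤ |h i| + |softmaxMean x h| := abs_sub _ _
    _ ≤ ‖h‖ + ‖h‖ :=
        add_le_add (norm_le_pi_norm h i) (abs_softmaxMean_le x (norm_le_pi_norm h))
    _ = 2 * ‖h‖ := by ring
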